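/- Let S = (s_1,…,s_L) be a feasible strategy profile of the capacity allocation game such that: (i) the component s_1 maximizes the single-link objective Σ_r a_{1r} b_r u_r(s_{1r}) over all feasible strategies of link 1, and (ii) for every flow r with a_{1r} = 1 one has s_{1r} = min_{k : a_{kr}=1} s_{kr}. Then S maximizes player 1's payoff over ALL strategy profiles: Q_1(S') ≤ Q_1(S) for every feasible profile S'. Consequently, S is Pareto-optimal: there is no feasible profile S' ≠ S with Q_l(S') > Q_l(S) for every player l simultaneously. -/

import Mathlib

/-! Link 1 can imitate any feasible profile `S'` on its own: the bottleneck allocations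
`min_k S'_{kr}` of its flows are bounded by `S'_{1r}`, so they form a feasible strategy of
link 1, and link 1's payoff under `S'` is exactly its single-link objective at that strategy.
Hence the single-link maximum bounds link 1's payoff over all profiles, and it is attained at
`S` because there every flow of link 1 has its bottleneck at link 1. No profile can then be
strictly better for every link, link 1 included. -/

open Finset

/-- The minimum allocation for flow `r` over all links on its path. -/
noncomputable def linkMin {L R : ℕ} (a : Fin L → Fin R → Bool)
    (S : Fin L → Fin R → ℝ) (r : Fin R) : ℝ :=
  sInf {v : ℝ | ∃ k, a k r = true ∧ v = S k r}

/-- Feasibility of a single player's (link's) strategy. -/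
def FeasibleStrat {L R : ℕ} (a : Fin L → Fin R → Bool) (c : Fin L → ℝ)
    (l : Fin L) (s : Fin R → ℝ) : Prop :=
  (∀ r, 0 ≤ s r) ∧ (∀ r, a l r = false → s r = 0) ∧
    (∑ r ∈ Finset.univ.filter (fun r => a l r = true), s r) ≤ c l

/-- Feasibility of a full strategy profile. -/
def FeasibleProfile {L R : ℕ} (a : Fin L → Fin R → Bool) (c : Fin L → ℝ)
    (S : Fin L → Fin R → ℝ) : Prop :=
  ∀ l, FeasibleStrat a c l (S l)

/-- Payoff of player `l`: weighted utilities of minimum allocations of its flows. -/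
noncomputable def payoff {L R : ℕ} (a : Fin L → Fin R → Bool)
    (b : Fin R → ℝ) (u : Fin R → ℝ → ℝ) (l : Fin L) (S : Fin L → Fin R → ℝ) : ℝ :=
  ∑ r ∈ Finset.univ.filter (fun r => a l r = true), b r * u r (linkMin a S r)

/-- Pure Nash equilibrium: no player can strictly improve by a unilateral feasible deviation. -/
def NashEq {L R : ℕ} (a : Fin L → Fin R → Bool) (c : Fin L → ℝ)
    (b : Fin R → ℝ) (u : Fin R → ℝ → ℝ) (S : Fin L → Fin R → ℝ) : Prop :=
  ∀ l s', FeasibleStrat a c l s' →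
    payoff a b u l (Function.update S l s') ≤ payoff a b u l S

/-- Social welfare of a profile. -/
noncomputable def welfare {L R : ℕ} (a : Fin L → Fin R → Bool)
    (u : Fin R → ℝ → ℝ) (S : Fin L → Fin R → ℝ) : ℝ :=
  ∑ r, u r (linkMin a S r)

section CapacityGame

variable {L R : ℕ} {a : Fin L → Fin R → Bool} {c : Fin L → ℝ}

theorem linkMin_le (S : Fin L → Fin R → ℝ) {r : Fin R} {k : Fin L} (hk : a k r = true) :
    linkMin a S r ≤ S k r := by
  have hfin : {v : ℝ | ∃ k, a k r = true ∧ v = S k r}.Finite :=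
    (Set.finite_range fun k => S k r).subset (by rintro v ⟨k, -, rfl⟩; exact ⟨k, rfl⟩)
  exact csInf_le hfin.bddBelow ⟨k, hk, rfl⟩

theorem linkMin_nonneg {S : Fin L → Fin R → ℝ} {r : Fin R} (hS : ∀ k, 0 ≤ S k r) :
    0 ≤ linkMin a S r :=
  Real.sInf_nonneg (by rintro v ⟨k, -, rfl⟩; exact hS k)

noncomputable def linkObjective (a : Fin L → Fin R → Bool) (b : Fin R → ℝ)
    (u : Fin R → ℝ → ℝ) (l : Fin L) (s : Fin R → ℝ) : ℝ :=
  ∑ r ∈ univ.filter (fun r => a l r = true), b r * u r (s r)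

theorem linkObjective_congr {b : Fin R → ℝ} {u : Fin R → ℝ → ℝ} {l : Fin L}
    {s t : Fin R → ℝ} (h : ∀ r, a l r = true → s r = t r) :
    linkObjective a b u l s = linkObjective a b u l t :=
  sum_congr rfl fun r hr => by rw [h r (mem_filter.1 hr).2]

noncomputable def bottleneckStrat (a : Fin L → Fin R → Bool) (S : Fin L → Fin R → ℝ)
    (l : Fin L) (r : Fin R) : ℝ :=
  if a l r = true then linkMin a S r else 0

theorem feasibleStrat_bottleneckStrat {S : Fin L → Fin R → ℝ} (hS : FeasibleProfile a c S)
    (l : Fin L) : FeasibleStrat a c l (bottleneckStrat a S l) := by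
  refine ⟨fun r => ?_, fun r hr => by simp [bottleneckStrat, hr], ?_⟩
  · unfold bottleneckStrat
    split_ifs
    exacts [linkMin_nonneg fun k => (hS k).1 r, le_rfl]
  · calc ∑ r ∈ univ.filter (fun r => a l r = true), bottleneckStrat a S l r
        ≤ ∑ r ∈ univ.filter (fun r => a l r = true), S l r :=
          sum_le_sum fun r hr => by
            rw [bottleneckStrat, if_pos (mem_filter.1 hr).2]
            exact linkMin_le S (mem_filter.1 hr).2
      _ ≤ c l := (hS l).2.2

theorem payoff_le_of_isMaxOn_linkObjective {b : Fin R → ℝ} {u : Fin R → ℝ → ℝ} {l : Fin L}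
    {S S' : Fin L → Fin R → ℝ}
    (hmax : IsMaxOn (linkObjective a b u l) {s | FeasibleStrat a c l s} (S l))
    (hmin : ∀ r, a l r = true → S l r = linkMin a S r) (hS' : FeasibleProfile a c S') :
    payoff a b u l S' ≤ payoff a b u l S :=
  calc payoff a b u l S'
      = linkObjective a b u l (bottleneckStrat a S' l) :=
        linkObjective_congr fun r hr => by rw [bottleneckStrat, if_pos hr]
    _ ≤ linkObjective a b u l (S l) := hmax (feasibleStrat_bottleneckStrat hS' l)
    _ = payoff a b u l S := linkObjective_congr hmin

end CapacityGame

theorem first_link_locally_optimal_implies_pareto_general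
    {L R : ℕ} (hL : 0 < L) (a : Fin L → Fin R → Bool) (c : Fin L → ℝ)
    (b : Fin R → ℝ) (u : Fin R → ℝ → ℝ) (S : Fin L → Fin R → ℝ)
    (hmax : ∀ t : Fin R → ℝ, FeasibleStrat a c ⟨0, hL⟩ t →
      (∑ r ∈ Finset.univ.filter (fun r => a ⟨0, hL⟩ r = true), b r * u r (t r)) ≤
      ∑ r ∈ Finset.univ.filter (fun r => a ⟨0, hL⟩ r = true), b r * u r (S ⟨0, hL⟩ r))
    (hmin : ∀ r : Fin R, a ⟨0, hL⟩ r = true → S ⟨0, hL⟩ r = linkMin a S r) :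
    (∀ S' : Fin L → Fin R → ℝ, FeasibleProfile a c S' →
      payoff a b u ⟨0, hL⟩ S' ≤ payoff a b u ⟨0, hL⟩ S) ∧
    ¬ ∃ S' : Fin L → Fin R → ℝ, FeasibleProfile a c S' ∧ S' ≠ S ∧
        ∀ l, payoff a b u l S < payoff a b u l S' := by
  have hopt : ∀ S', FeasibleProfile a c S' → payoff a b u ⟨0, hL⟩ S' ≤ payoff a b u ⟨0, hL⟩ S :=
    fun _ hS' => payoff_le_of_isMaxOn_linkObjective (isMaxOn_iff.2 hmax) hmin hS'
  refine ⟨hopt, ?_⟩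
  rintro ⟨S', hS', -, hdom⟩
  exact (hdom ⟨0, hL⟩).not_ge (hopt S' hS')

/-- if link 1's strategy maximizes its single-link objective and all its
flows attain their path minimum at link 1, then link 1's payoff is maximal over all
feasible profiles; consequently the profile is Pareto-optimal. -/
theorem first_link_locally_optimal_implies_pareto
    {L R : ℕ} (hL : 0 < L) (a : Fin L → Fin R → Bool) (c : Fin L → ℝ)
    (b : Fin R → ℝ) (u : Fin R → ℝ → ℝ) (S : Fin L → Fin R → ℝ)
    (hc : ∀ l, 0 < c l)
    (hflow : ∀ r : Fin R, ∃ k, a k r = true)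
    (hu : ∀ r, MonotoneOn (u r) (Set.Ici 0))
    (hb : ∀ r, 0 ≤ b r)
    (hS : FeasibleProfile a c S)
    (hmax : ∀ t : Fin R → ℝ, FeasibleStrat a c ⟨0, hL⟩ t →
      (∑ r ∈ Finset.univ.filter (fun r => a ⟨0, hL⟩ r = true), b r * u r (t r)) ≤
      ∑ r ∈ Finset.univ.filter (fun r => a ⟨0, hL⟩ r = true), b r * u r (S ⟨0, hL⟩ r))
    (hmin : ∀ r : Fin R, a ⟨0, hL⟩ r = true → S ⟨0, hL⟩ r = linkMin a S r) :
    (∀ S' : Fin L → Fin R → ℝ, FeasibleProfile a c S' →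
      payoff a b u ⟨0, hL⟩ S' ≤ payoff a b u ⟨0, hL⟩ S) ∧
    ¬ ∃ S' : Fin L → Fin R → ℝ, FeasibleProfile a c S' ∧ S' ≠ S ∧
        ∀ l, payoff a b u l S < payoff a b u l S' :=
  first_link_locally_optimal_implies_pareto_general hL a c b u S hmax hmin
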